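/- arXiv:1610.03726 — 4 statements merged into one kernel-verified Lean document; each statement's English description precedes it below -/
import Mathlib

section
/- In an effect algebra E with the Riesz Decomposition Property, if a and b are sharp elements (a ∧ a' = 0 and b ∧ b' = 0 exist) with a ∧ b = 0 (existing), then a + b is defined in E and a + b equals the supremum a ∨ b. -/
/-- An effect algebra: a partial algebra `(E; +, 0, 1)` where the partial
addition is encoded as an `Option`-valued total operation. -/
class EffectAlgebra (E : Type*) extends Zero E, One E where
  padd : E → E → Option E
  padd_comm : ∀ a b : E, padd a b = padd b a
  padd_assoc : ∀ a b c : E,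
    (padd a b).bind (fun s => padd s c) = (padd b c).bind (fun s => padd a s)
  orthosupplement : ∀ a : E, ∃! b : E, padd a b = some 1
  eq_zero_of_padd_one : ∀ a b : E, padd a 1 = some b → a = 0

namespace EffectAlgebra

variable {E : Type*} [EffectAlgebra E]

/-- The induced order: `a ≤ b` iff `a + c = b` for some `c`. -/
def ealeq (a b : E) : Prop := ∃ c, padd a c = some b

/-- The orthocomplement `a'`: the unique element with `a + a' = 1`. -/
noncomputable def ortho (a : E) : E := (orthosupplement a).choose

end EffectAlgebra

namespace EffectAlgebra

lemma padd_zero_one {E : Type*} [EffectAlgebra E] : padd (0:E) 1 = some 1 := by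
  obtain ⟨c, hc, _⟩ := orthosupplement (1:E)
  have hc0 : c = 0 := eq_zero_of_padd_one c 1 (by rw [padd_comm]; exact hc)
  rw [padd_comm]; rw [hc0] at hc; exact hc

lemma zero_padd {E : Type*} [EffectAlgebra E] (a : E) : padd (0:E) a = some a := by
  obtain ⟨a', ha', _⟩ := orthosupplement a
  have key := padd_assoc (0:E) a a'
  rw [ha'] at key
  simp only [Option.bind_some] at key
  rw [padd_zero_one] at key
  cases h0 : padd (0:E) a with
  | none => rw [h0] at key; simp at key
  | some t =>
    rw [h0] at key
    simp only [Option.bind_some] at key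
    obtain ⟨d, _, huniq⟩ := orthosupplement a'
    have ht := huniq t (show padd a' t = some 1 by rw [padd_comm]; exact key)
    have ha2 := huniq a (show padd a' a = some 1 by rw [padd_comm]; exact ha')
    rw [ht, ha2]

end EffectAlgebra

open EffectAlgebra in
/-- In an effect algebra with RDP, if `a`, `b` are sharp (`a ∧ a' = 0`,
`b ∧ b' = 0`) and `a ∧ b = 0`, then `a + b` is defined and equals the
supremum `a ∨ b`. (Infima/suprema are expressed via lower/upper bounds
in the induced order.) -/
theorem effectAlgebra_RDP_sharp_add_eq_sup
    {E : Type*} [EffectAlgebra E]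
    (hRDP : ∀ a b c s : E, padd b c = some s → ealeq a s →
      ∃ b₁ c₁ : E, ealeq b₁ b ∧ ealeq c₁ c ∧ padd b₁ c₁ = some a)
    (a b : E)
    (ha : ∀ c : E, ealeq c a → ealeq c (ortho a) → c = 0)
    (hb : ∀ c : E, ealeq c b → ealeq c (ortho b) → c = 0)
    (hab : ∀ c : E, ealeq c a → ealeq c b → c = 0) :
    ∃ s : E, padd a b = some s ∧
      ealeq a s ∧ ealeq b s ∧ (∀ c : E, ealeq a c → ealeq b c → ealeq s c) := by
  clear ha hb
  -- Step 1: a ≤ ortho b, hence a + b is defined.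
  obtain ⟨a', ha'⟩ := (orthosupplement a).exists
  have hbo : padd b (ortho b) = some 1 := (orthosupplement b).choose_spec.1
  obtain ⟨b₁, c₁, hb₁b, hc₁, hsum⟩ := hRDP a b (ortho b) 1 hbo ⟨a', ha'⟩
  have hb₁0 : b₁ = 0 := hab b₁ ⟨c₁, hsum⟩ hb₁b
  subst hb₁0
  rw [zero_padd] at hsum
  have hc₁a : c₁ = a := Option.some_injective _ hsum
  obtain ⟨t, ht⟩ := hc₁
  rw [hc₁a] at ht
  -- associativity: b + (a + t) = b + ortho b = 1, so b + a is defined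
  have key := padd_assoc b a t
  rw [ht, Option.bind_some, hbo] at key
  cases hba : padd b a with
  | none => rw [hba] at key; simp at key
  | some s =>
    have hab' : padd a b = some s := by rw [padd_comm]; exact hba
    refine ⟨s, hab', ⟨b, hab'⟩, ⟨a, hba⟩, ?_⟩
    intro c hac hbc
    obtain ⟨d, had⟩ := hac
    obtain ⟨a₁, d₁, ha₁a, hd₁d, hsum2⟩ := hRDP b a d c had hbc
    have ha₁0 : a₁ = 0 := hab a₁ ha₁a ⟨d₁, hsum2⟩
    subst ha₁0
    rw [zero_padd] at hsum2
    have hd₁b : d₁ = b := Option.some_injective _ hsum2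
    obtain ⟨e, he⟩ := hd₁d
    rw [hd₁b] at he
    have key2 := padd_assoc a b e
    rw [he, Option.bind_some, had, hab', Option.bind_some] at key2
    exact ⟨e, key2⟩
end

section
/- In a σ-complete MV-algebra E, the countable distributive laws hold: a ∧ (⋁ₙ aₙ) = ⋁ₙ (a ∧ aₙ) and a ∨ (⋀ₙ aₙ) = ⋀ₙ (a ∨ aₙ) for every a and every sequence (aₙ) in E. -/
open Set

/-- A σ-complete MV-effect algebra: an MV-algebra (with `⊕`, `¬`, `⊥ = 0`,
`⊤ = 1`) whose natural order is the given lattice order and in which every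
countable subset has a supremum and an infimum (given by `sSup`/`sInf`). -/
class SigmaMVEffectAlgebra (E : Type*) extends
    Lattice E, BoundedOrder E, SupSet E, InfSet E where
  oplus : E → E → E
  neg : E → E
  oplus_assoc : ∀ a b c : E, oplus (oplus a b) c = oplus a (oplus b c)
  oplus_comm : ∀ a b : E, oplus a b = oplus b a
  oplus_bot : ∀ a : E, oplus a ⊥ = a
  neg_neg : ∀ a : E, neg (neg a) = a
  oplus_top : ∀ a : E, oplus a ⊤ = ⊤
  neg_bot : neg (⊥ : E) = ⊤
  luk : ∀ a b : E, oplus (neg (oplus (neg a) b)) b = oplus (neg (oplus (neg b) a)) a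
  le_iff_oplus : ∀ a b : E, a ≤ b ↔ oplus (neg a) b = ⊤
  isLUB_sSup : ∀ s : Set E, s.Countable → IsLUB s (sSup s)
  isGLB_sInf : ∀ s : Set E, s.Countable → IsGLB s (sInf s)

namespace SigmaMVEffectAlgebra

variable {E : Type*} [SigmaMVEffectAlgebra E]

open Classical in
/-- The partial effect-algebra addition of the MV-effect algebra:
`a + b` is defined iff `a ≤ b'`, and then `a + b = a ⊕ b`. -/
noncomputable def padd (a b : E) : Option E :=
  if a ≤ neg b then some (oplus a b) else none

/-- An observable on `E`: a `σ`-homomorphism from the Borel σ-algebra of `ℝ`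
into `E`. -/
structure Observable (E : Type*) [SigmaMVEffectAlgebra E] where
  toFun : Set ℝ → E
  total : toFun Set.univ = ⊤
  additive : ∀ A B : Set ℝ, MeasurableSet A → MeasurableSet B → Disjoint A B →
    padd (toFun A) (toFun B) = some (toFun (A ∪ B))
  cont : ∀ A : ℕ → Set ℝ, (∀ n, MeasurableSet (A n)) → Monotone A →
    IsLUB (Set.range fun n => toFun (A n)) (toFun (⋃ n, A n))

/-- An observable is bounded if `x([α,β]) = 1` for some interval. -/
def Observable.Bounded (x : Observable E) : Prop :=
  ∃ α β : ℝ, x.toFun (Set.Icc α β) = ⊤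

/-- The spectral resolution `B_x(t) = x((-∞,t))` of an observable. -/
def spec (x : Observable E) (t : ℝ) : E := x.toFun (Set.Iio t)

end SigmaMVEffectAlgebra


namespace SigmaMVEffectAlgebra

variable {E : Type*} [SigmaMVEffectAlgebra E]

instance : Std.Associative (oplus : E → E → E) := ⟨oplus_assoc⟩
instance : Std.Commutative (oplus : E → E → E) := ⟨oplus_comm⟩

lemma neg_top : neg (⊤ : E) = ⊥ := by rw [← neg_bot, neg_neg]

lemma neg_oplus_self (a : E) : oplus (neg a) a = ⊤ := (le_iff_oplus a a).1 le_rfl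

lemma bot_oplus (a : E) : oplus ⊥ a = a := by rw [oplus_comm, oplus_bot]

lemma le_oplus (d a : E) : a ≤ oplus d a := by
  rw [le_iff_oplus]
  calc oplus (neg a) (oplus d a) = oplus d (oplus (neg a) a) := by ac_rfl
    _ = ⊤ := by rw [neg_oplus_self, oplus_top]

lemma neg_le_neg' {a b : E} (h : a ≤ b) : neg b ≤ neg a := by
  rw [le_iff_oplus, neg_neg, oplus_comm]
  exact (le_iff_oplus a b).1 h

lemma eq_oplus_of_le {a b : E} (h : a ≤ b) : b = oplus (neg (oplus (neg b) a)) a := by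
  have h1 : oplus (neg (oplus (neg a) b)) b = b := by
    rw [(le_iff_oplus a b).1 h, neg_top, bot_oplus]
  rw [← luk, h1]

lemma oplus_le_oplus_left {a b : E} (h : a ≤ b) (c : E) : oplus a c ≤ oplus b c := by
  rw [eq_oplus_of_le h, le_iff_oplus]
  calc oplus (neg (oplus a c)) (oplus (oplus (neg (oplus (neg b) a)) a) c)
      = oplus (neg (oplus (neg b) a)) (oplus (neg (oplus a c)) (oplus a c)) := by ac_rfl
    _ = ⊤ := by rw [neg_oplus_self, oplus_top]

lemma oplus_le_oplus_right (a : E) {b c : E} (h : b ≤ c) : oplus a b ≤ oplus a c := by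
  rw [oplus_comm a b, oplus_comm a c]; exact oplus_le_oplus_left h a

end SigmaMVEffectAlgebra

namespace SigmaMVEffectAlgebra

variable {E : Type*} [SigmaMVEffectAlgebra E]

lemma isLUB_pair_oplus (a b : E) :
    IsLUB ({a, b} : Set E) (oplus (neg (oplus (neg a) b)) b) := by
  constructor
  · rintro x (rfl | rfl)
    · rw [luk]; exact le_oplus _ _
    · exact le_oplus _ _
  · intro c hc
    have ha : a ≤ c := hc (Set.mem_insert _ _)
    have hb : b ≤ c := hc (Set.mem_insert_of_mem _ rfl)
    have h1 : oplus (neg (oplus (neg a) b)) b ≤ oplus (neg (oplus (neg a) c)) c := by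
      rw [luk, luk (a := a) (b := c)]
      exact oplus_le_oplus_left
        (neg_le_neg' (oplus_le_oplus_left (neg_le_neg' hb) a)) a
    rwa [(le_iff_oplus a c).1 ha, neg_top, bot_oplus] at h1

lemma sup_eq (a b : E) : a ⊔ b = oplus (neg (oplus (neg a) b)) b :=
  isLUB_pair.unique (isLUB_pair_oplus a b)

lemma isLUB_neg_of_isGLB {s : Set E} {x : E} (h : IsGLB s x) :
    IsLUB (neg '' s) (neg x) := by
  constructor
  · rintro y ⟨z, hz, rfl⟩
    exact neg_le_neg' (h.1 hz)
  · intro u hu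
    have h1 : neg u ≤ x := by
      refine h.2 fun z hz => ?_
      have h2 := neg_le_neg' (hu (Set.mem_image_of_mem neg hz))
      rwa [neg_neg] at h2
    have h2 := neg_le_neg' h1
    rwa [neg_neg] at h2

lemma isGLB_neg_of_isLUB {s : Set E} {x : E} (h : IsLUB s x) :
    IsGLB (neg '' s) (neg x) := by
  constructor
  · rintro y ⟨z, hz, rfl⟩
    exact neg_le_neg' (h.1 hz)
  · intro u hu
    have h1 : x ≤ neg u := by
      refine h.2 fun z hz => ?_
      have h2 := neg_le_neg' (hu (Set.mem_image_of_mem neg hz))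
      rwa [neg_neg] at h2
    have h2 := neg_le_neg' h1
    rwa [neg_neg] at h2

lemma neg_inf' (a b : E) : neg (a ⊓ b) = neg a ⊔ neg b := by
  have h := isLUB_neg_of_isGLB (isGLB_pair (a := a) (b := b))
  rw [Set.image_pair] at h
  exact h.unique isLUB_pair

lemma neg_sup' (a b : E) : neg (a ⊔ b) = neg a ⊓ neg b := by
  have h := isGLB_neg_of_isLUB (isLUB_pair (a := a) (b := b))
  rw [Set.image_pair] at h
  exact h.unique isGLB_pair

/-- The MV product `a ⊙ b`. -/
def odot (a b : E) : E := neg (oplus (neg a) (neg b))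

lemma odot_comm (a b : E) : odot a b = odot b a := by
  unfold odot; rw [oplus_comm]

lemma odot_le_iff (a x u : E) : odot a x ≤ u ↔ x ≤ oplus (neg a) u := by
  rw [le_iff_oplus, le_iff_oplus, odot, neg_neg]
  have h : oplus (oplus (neg a) (neg x)) u = oplus (neg x) (oplus (neg a) u) := by ac_rfl
  rw [h]

lemma odot_le_odot (a : E) {x y : E} (h : x ≤ y) : odot a x ≤ odot a y :=
  neg_le_neg' (oplus_le_oplus_right (neg a) (neg_le_neg' h))

lemma inf_eq (a b : E) : a ⊓ b = odot b (oplus (neg b) a) := by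
  have h1 : a ⊓ b = neg (neg a ⊔ neg b) := by rw [← neg_inf', neg_neg]
  rw [h1, sup_eq, neg_neg, odot]
  congr 1
  rw [oplus_comm a (neg b)]
  exact oplus_comm _ _

lemma odot_isLUB (c : E) {f : ℕ → E} {s : E} (h : IsLUB (Set.range f) s) :
    IsLUB (Set.range fun n => odot c (f n)) (odot c s) := by
  constructor
  · rintro y ⟨n, rfl⟩
    exact odot_le_odot c (h.1 ⟨n, rfl⟩)
  · intro u hu
    rw [odot_le_iff]
    refine h.2 fun z hz => ?_
    obtain ⟨n, rfl⟩ := hz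
    rw [← odot_le_iff]
    exact hu ⟨n, rfl⟩

lemma inf_iSup_eq (a : E) (f : ℕ → E) : a ⊓ (⨆ n, f n) = ⨆ n, a ⊓ f n := by
  have hs : IsLUB (Set.range f) (⨆ n, f n) := isLUB_sSup _ (Set.countable_range f)
  have hu : IsLUB (Set.range fun n => a ⊓ f n) (⨆ n, a ⊓ f n) :=
    isLUB_sSup _ (Set.countable_range _)
  apply le_antisymm
  · rw [inf_eq a (⨆ n, f n)]
    set c := oplus (neg (⨆ n, f n)) a with hc
    rw [odot_comm]
    refine (odot_isLUB c hs).2 ?_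
    rintro y ⟨n, rfl⟩
    calc odot c (f n) = odot (f n) c := odot_comm _ _
      _ ≤ odot (f n) (oplus (neg (f n)) a) :=
        odot_le_odot _ (oplus_le_oplus_left (neg_le_neg' (hs.1 ⟨n, rfl⟩)) a)
      _ = a ⊓ f n := (inf_eq a (f n)).symm
      _ ≤ ⨆ n, a ⊓ f n := hu.1 ⟨n, rfl⟩
  · refine hu.2 ?_
    rintro y ⟨n, rfl⟩
    exact inf_le_inf_left a (hs.1 ⟨n, rfl⟩)

lemma neg_iSup (f : ℕ → E) : neg (⨆ n, f n) = ⨅ n, neg (f n) := by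
  have h := isGLB_neg_of_isLUB (isLUB_sSup (Set.range f) (Set.countable_range f))
  rw [← Set.range_comp] at h
  exact h.unique (isGLB_sInf _ (Set.countable_range _))

lemma neg_iInf (f : ℕ → E) : neg (⨅ n, f n) = ⨆ n, neg (f n) := by
  have h := isLUB_neg_of_isGLB (isGLB_sInf (Set.range f) (Set.countable_range f))
  rw [← Set.range_comp] at h
  exact h.unique (isLUB_sSup _ (Set.countable_range _))

end SigmaMVEffectAlgebra

/-- In a σ-complete MV-algebra the countable distributive laws hold:
`a ∧ ⋁ₙ aₙ = ⋁ₙ (a ∧ aₙ)` and `a ∨ ⋀ₙ aₙ = ⋀ₙ (a ∨ aₙ)`. -/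
theorem sigmaMV_countable_distributive_laws
    {E : Type*} [SigmaMVEffectAlgebra E] (a : E) (f : ℕ → E) :
    a ⊓ (⨆ n, f n) = (⨆ n, a ⊓ f n) ∧
    a ⊔ (⨅ n, f n) = (⨅ n, a ⊔ f n) := by
  open SigmaMVEffectAlgebra in
  refine ⟨inf_iSup_eq a f, ?_⟩
  have h := inf_iSup_eq (neg a) (fun n => neg (f n))
  calc a ⊔ (⨅ n, f n)
      = neg (neg (a ⊔ ⨅ n, f n)) := (SigmaMVEffectAlgebra.neg_neg _).symm
    _ = neg (neg a ⊓ neg (⨅ n, f n)) := by rw [neg_sup']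
    _ = neg (neg a ⊓ ⨆ n, neg (f n)) := by rw [neg_iInf]
    _ = neg (⨆ n, neg a ⊓ neg (f n)) := by rw [h]
    _ = ⨅ n, neg (neg a ⊓ neg (f n)) := neg_iSup _
    _ = ⨅ n, a ⊔ f n := by
        refine congrArg _ (funext fun n => ?_)
        rw [neg_inf', SigmaMVEffectAlgebra.neg_neg, SigmaMVEffectAlgebra.neg_neg]
end

section
/- On the set of bounded observables of a σ-MV-effect algebra with the Olson order (x ⪯ y iff B_y(t) ≤ B_x(t) for all t), the order is translation-invariant: if x ⪯ y then x + z ⪯ y + z for every bounded observable z, where the sum is given by B_{x+y}(t) = ⋁_{r∈ℚ}(B_x(r) ∧ B_y(t−r)). -/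
open Set

open SigmaMVEffectAlgebra in
/-- The Olson order (`x ⪯ y` iff `B_y(t) ≤ B_x(t)` for all `t`) is
translation invariant for the sum of bounded observables: if `x ⪯ y`
then `x + z ⪯ y + z`. -/
theorem olson_order_translation_invariant
    {E : Type*} [SigmaMVEffectAlgebra E] (x y z : Observable E)
    (hx : x.Bounded) (hy : y.Bounded) (hz : z.Bounded)
    (hxy : ∀ t : ℝ, spec y t ≤ spec x t) :
    ∀ t : ℝ, (⨆ r : ℚ, spec y r ⊓ spec z (t - r)) ≤
      ⨆ r : ℚ, spec x r ⊓ spec z (t - r) := by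
  intro t
  have h1 := SigmaMVEffectAlgebra.isLUB_sSup (Set.range fun r : ℚ => spec y r ⊓ spec z (t - r)) (Set.countable_range _)
  have h2 := SigmaMVEffectAlgebra.isLUB_sSup (Set.range fun r : ℚ => spec x r ⊓ spec z (t - r)) (Set.countable_range _)
  refine h1.2 ?_
  rintro e ⟨r, rfl⟩
  exact le_trans (inf_le_inf_right _ (hxy r)) (h2.1 ⟨r, rfl⟩)
end

section
/- For bounded observables x, y on a σ-lattice effect algebra, the spectral resolution of the Olson-order join satisfies B_{x∨y}(t) = B_x(t) ∧ B_y(t) for all t ∈ ℝ (no left-regularization is needed for finitely many observables), provided the lattice satisfies the countable distributive law a ∧ ⋁ₙaₙ = ⋁ₙ(a ∧ aₙ). -/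
open Set

/-- A σ-lattice effect algebra: an effect algebra (partial addition encoded
via `Option`) whose induced order is the given lattice order, which is a
bounded lattice with suprema and infima of all countable subsets. -/
class SigmaLatticeEffectAlgebra (E : Type*) extends Lattice E, BoundedOrder E where
  padd : E → E → Option E
  padd_comm : ∀ a b : E, padd a b = padd b a
  padd_assoc : ∀ a b c : E,
    (padd a b).bind (fun s => padd s c) = (padd b c).bind (fun s => padd a s)
  orthosupplement : ∀ a : E, ∃! b : E, padd a b = some ⊤
  eq_bot_of_padd_top : ∀ a b : E, padd a ⊤ = some b → a = ⊥
  le_iff_padd : ∀ a b : E, a ≤ b ↔ ∃ c, padd a c = some b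
  exists_isLUB : ∀ s : Set E, s.Countable → ∃ a, IsLUB s a
  exists_isGLB : ∀ s : Set E, s.Countable → ∃ a, IsGLB s a

namespace SigmaLatticeEffectAlgebra

/-- An observable on `E`: a σ-homomorphism from the Borel σ-algebra of `ℝ`
into `E`. -/
structure Observable (E : Type*) [SigmaLatticeEffectAlgebra E] where
  toFun : Set ℝ → E
  total : toFun Set.univ = ⊤
  additive : ∀ A B : Set ℝ, MeasurableSet A → MeasurableSet B → Disjoint A B →
    padd (toFun A) (toFun B) = some (toFun (A ∪ B))
  cont : ∀ A : ℕ → Set ℝ, (∀ n, MeasurableSet (A n)) → Monotone A →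
    IsLUB (Set.range fun n => toFun (A n)) (toFun (⋃ n, A n))

variable {E : Type*} [SigmaLatticeEffectAlgebra E]

/-- The spectral resolution `B_x(t) = x((-∞,t))` of an observable. -/
def spec (x : Observable E) (t : ℝ) : E := x.toFun (Set.Iio t)

end SigmaLatticeEffectAlgebra


open SigmaLatticeEffectAlgebra in
theorem spec_mono {E : Type*} [SigmaLatticeEffectAlgebra E]
    (x : Observable E) {u t : ℝ} (h : u ≤ t) : spec x u ≤ spec x t := by
  have hadd := x.additive (Set.Iio u) (Set.Iio t \ Set.Iio u) measurableSet_Iio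
    (measurableSet_Iio.diff measurableSet_Iio) Set.disjoint_sdiff_right
  rw [Set.union_diff_cancel (Set.Iio_subset_Iio h)] at hadd
  exact (SigmaLatticeEffectAlgebra.le_iff_padd _ _).2 ⟨_, hadd⟩

open SigmaLatticeEffectAlgebra in
/-- For bounded observables `x, y` on a σ-lattice effect algebra satisfying
the countable distributive law `a ∧ ⋁ₙ aₙ = ⋁ₙ (a ∧ aₙ)`, the spectral
resolution of the Olson-order join satisfies
`B_{x∨y}(t) = ⋁_{u<t}(B_x(u) ∧ B_y(u)) = B_x(t) ∧ B_y(t)`. -/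
theorem olson_join_spectral_resolution
    {E : Type*} [SigmaLatticeEffectAlgebra E]
    (hdist : ∀ (a : E) (f : ℕ → E) (s : E), IsLUB (Set.range f) s →
      IsLUB (Set.range fun n => a ⊓ f n) (a ⊓ s))
    (x y : Observable E)
    (hx : ∃ α β : ℝ, x.toFun (Set.Icc α β) = ⊤)
    (hy : ∃ α β : ℝ, y.toFun (Set.Icc α β) = ⊤) (t : ℝ) :
    IsLUB ((fun u : ℝ => spec x u ⊓ spec y u) '' Set.Iio t)
      (spec x t ⊓ spec y t) := by

  set u : ℕ → ℝ := fun n => t - 1 / (n + 1) with hu_def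
  have hu_lt : ∀ n, u n < t := by
    intro n
    have : (0:ℝ) < 1 / (n + 1) := by positivity
    simp [hu_def]; linarith
  have hu_mono : Monotone u := by
    intro n m hnm
    have : (1:ℝ) / (m + 1) ≤ 1 / (n + 1) := by
      apply one_div_le_one_div_of_le <;> [positivity; exact_mod_cast by omega]
    simp only [hu_def]
    linarith
  have hUnion : (⋃ n, Set.Iio (u n)) = Set.Iio t := by
    ext s
    simp only [Set.mem_iUnion, Set.mem_Iio]
    constructor
    · rintro ⟨n, hn⟩; exact hn.trans (hu_lt n)
    · intro hs
      obtain ⟨n, hn⟩ := exists_nat_one_div_lt (show (0:ℝ) < t - s by linarith)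
      exact ⟨n, by simp only [hu_def, Set.mem_Iio]; linarith⟩
  have hx_lub : IsLUB (Set.range fun n => spec x (u n)) (spec x t) := by
    have := x.cont (fun n => Set.Iio (u n)) (fun n => measurableSet_Iio)
      (fun n m hnm => Set.Iio_subset_Iio (hu_mono hnm))
    rwa [hUnion] at this
  have hy_lub : IsLUB (Set.range fun n => spec y (u n)) (spec y t) := by
    have := y.cont (fun n => Set.Iio (u n)) (fun n => measurableSet_Iio)
      (fun n m hnm => Set.Iio_subset_Iio (hu_mono hnm))
    rwa [hUnion] at this
  constructor
  · rintro e ⟨v, hv, rfl⟩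
    exact inf_le_inf (spec_mono x (le_of_lt hv)) (spec_mono y (le_of_lt hv))
  · rintro b hb
    have h1 : ∀ n, spec x (u n) ⊓ spec y t ≤ b := by
      intro n
      have hl := hdist (spec x (u n)) (fun m => spec y (u m)) _ hy_lub
      apply hl.2
      rintro e ⟨m, rfl⟩
      have hle : spec x (u n) ⊓ spec y (u m) ≤
          spec x (u (max n m)) ⊓ spec y (u (max n m)) :=
        inf_le_inf (spec_mono x (hu_mono (le_max_left n m)))
          (spec_mono y (hu_mono (le_max_right n m)))
      exact hle.trans (hb ⟨u (max n m), hu_lt _, rfl⟩)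
    have h2 := hdist (spec y t) (fun n => spec x (u n)) _ hx_lub
    rw [inf_comm]
    apply h2.2
    rintro e ⟨n, rfl⟩
    show spec y t ⊓ spec x (u n) ≤ b
    rw [inf_comm]
    exact h1 n
end
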